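/- Let α be an algebraic real number of degree m, α_k = p_k/q_k the k-th truncation of the Liouville constant, and γ_k = α·α_k. Then H(γ_k) ≤ H(α) · H(α_k)^m, where heights of algebraic numbers are heights of their minimal integer polynomials. -/

import Mathlib

open Polynomial Filter

/-- Primitive integer minimal polynomial of a real number. -/
noncomputable def intMin (x : ℝ) : Polynomial ℤ :=
  (IsLocalization.integerNormalization (nonZeroDivisors ℤ) (minpoly ℚ x)).primPart

/-- Height of an integer polynomial: max absolute value of its coefficients. -/
def polyHeight (P : Polynomial ℤ) : ℕ :=
  (Finset.range (P.natDegree + 1)).sup fun i => (P.coeff i).natAbs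

/-- Height of an algebraic real number. -/
noncomputable def aheight (x : ℝ) : ℕ := polyHeight (intMin x)

/-- Degree of a real number over ℚ. -/
noncomputable def adeg (x : ℝ) : ℕ := (minpoly ℚ x).natDegree

/-- Liouville constant L = ∑ 10^{-j!}, j ≥ 1. -/
noncomputable def Lconst : ℝ := ∑' j : ℕ, 1 / (10 : ℝ) ^ (Nat.factorial (j + 1))

/-- Numerator of k-th truncation of L. -/
def pk (k : ℕ) : ℤ := ∑ j ∈ Finset.range k, 10 ^ ((Nat.factorial k) - (Nat.factorial (j + 1)))

/-- Denominator of k-th truncation of L. -/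
def qk (k : ℕ) : ℤ := 10 ^ (Nat.factorial k)

/-- Set of degree-n algebraic approximants witnessing exponent w. -/
noncomputable def wSet (ξ : ℝ) (n : ℕ) (w : ℝ) : Set ℝ :=
  {γ : ℝ | IsAlgebraic ℚ γ ∧ adeg γ = n ∧ 0 < |ξ - γ| ∧
    |ξ - γ| < (aheight γ : ℝ) ^ (-w - 1)}

/-- ξ is a U_m-number: w*_m(ξ) = ∞ and w*_n(ξ) < ∞ for 1 ≤ n < m. -/
noncomputable def IsUm (ξ : ℝ) (m : ℕ) : Prop :=
  (∀ w : ℝ, (wSet ξ m w).Infinite) ∧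
    ∀ n : ℕ, 1 ≤ n → n < m → ∃ w : ℝ, (wSet ξ n w).Finite

/-- ξ is a Liouville number. -/
def IsLiouville' (x : ℝ) : Prop :=
  ∀ w : ℝ, 0 < w →
    {r : ℚ | 0 < |x - (r : ℝ)| ∧ |x - (r : ℝ)| < (r.den : ℝ) ^ (-w)}.Infinite

/-- Height of a rational number: max of |numerator| and denominator. -/
def qheight (r : ℚ) : ℕ := max r.num.natAbs r.den

/-!
Let `P = ∑ aᵢ Xⁱ` be the primitive minimal polynomial of `α`, of degree `m`. For nonzero integers
`p, q`, the number `γ = α p / q` is a root of `Q = ∑ aᵢ p^(m-i) qⁱ Xⁱ`, i.e. of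
`(P.scaleRoots p).comp (C q * X)`, whose coefficients are bounded by `H(α) max(|p|, |q|)^m`.
Since `γ` and `α` generate the same field, `Q` has the degree of `γ`, so it is an integer multiple
of the primitive minimal polynomial of `γ` and `H(γ) ≤ H(Q)`. Finally `p_k ≡ 1 (mod 10)` is
coprime to `q_k = 10^(k!)`, so `max(p_k, q_k) ≤ H(α_k)`.
-/

section Height

lemma natDegree_C_mul_X_le {R : Type*} [Semiring R] (a : R) : (C a * X).natDegree ≤ 1 :=
  (natDegree_C_mul_le a X).trans natDegree_X_le

lemma coeff_natAbs_le_polyHeight (P : ℤ[X]) (i : ℕ) : (P.coeff i).natAbs ≤ polyHeight P := by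
  rcases le_or_gt i P.natDegree with hi | hi
  · exact Finset.le_sup (f := fun i => (P.coeff i).natAbs) (Finset.mem_range_succ_iff.mpr hi)
  · simp [coeff_eq_zero_of_natDegree_lt hi]

lemma polyHeight_le {P : ℤ[X]} {B : ℕ} (h : ∀ i ≤ P.natDegree, (P.coeff i).natAbs ≤ B) :
    polyHeight P ≤ B :=
  Finset.sup_le fun i hi => h i (Finset.mem_range_succ_iff.mp hi)

lemma polyHeight_le_polyHeight_mul_C (P : ℤ[X]) {s : ℤ} (hs : s ≠ 0) :
    polyHeight P ≤ polyHeight (P * C s) :=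
  polyHeight_le fun i _ =>
    calc (P.coeff i).natAbs ≤ (P.coeff i).natAbs * s.natAbs :=
          Nat.le_mul_of_pos_right _ (Int.natAbs_pos.mpr hs)
      _ = ((P * C s).coeff i).natAbs := by rw [coeff_mul_C, Int.natAbs_mul]
      _ ≤ polyHeight (P * C s) := coeff_natAbs_le_polyHeight _ i

lemma exists_eq_mul_C_of_dvd_of_natDegree_le {P Q : ℤ[X]} (hQ : Q ≠ 0) (hPQ : P ∣ Q)
    (hdeg : Q.natDegree ≤ P.natDegree) : ∃ s : ℤ, s ≠ 0 ∧ Q = P * C s := by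
  obtain ⟨S, rfl⟩ := hPQ
  have hS : S ≠ 0 := right_ne_zero_of_mul hQ
  rw [natDegree_mul (left_ne_zero_of_mul hQ) hS] at hdeg
  obtain ⟨s, rfl⟩ := natDegree_eq_zero.mp (show S.natDegree = 0 by omega)
  exact ⟨s, by simpa using hS, rfl⟩

end Height

section IntMin

lemma exists_map_intMin_eq_C_mul_minpoly {x : ℝ} (hx : IsAlgebraic ℚ x) :
    ∃ c : ℚ, c ≠ 0 ∧ (intMin x).map (algebraMap ℤ ℚ) = C c * minpoly ℚ x := by
  set N := IsLocalization.integerNormalization (nonZeroDivisors ℤ) (minpoly ℚ x)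
  obtain ⟨b, hb0, hb⟩ := IsLocalization.integerNormalization_spec
    (nonZeroDivisors ℤ) (minpoly ℚ x)
  have hN : N ≠ 0 := by
    rw [Ne, IsFractionRing.integerNormalization_eq_zero_iff]
    exact minpoly.ne_zero hx.isIntegral
  have hcont : ((N.content : ℤ) : ℚ) ≠ 0 :=
    Int.cast_ne_zero.mpr fun h => hN (content_eq_zero_iff.mp h)
  have hmapN : N.map (algebraMap ℤ ℚ) = C (b : ℚ) * minpoly ℚ x := by
    rw [hb]; ext i; simp [zsmul_eq_mul]
  have hsplit : C ((N.content : ℤ) : ℚ) * (intMin x).map (algebraMap ℤ ℚ)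
      = C (b : ℚ) * minpoly ℚ x := by
    rw [← hmapN]
    conv_rhs => rw [N.eq_C_content_mul_primPart, Polynomial.map_mul, map_C]
    rfl
  refine ⟨(b : ℚ) / N.content,
    div_ne_zero (Int.cast_ne_zero.mpr (nonZeroDivisors.ne_zero hb0)) hcont, ?_⟩
  apply mul_left_cancel₀ (C_ne_zero.mpr hcont)
  rw [hsplit, ← mul_assoc, ← C_mul, mul_div_cancel₀ _ hcont]

lemma isPrimitive_intMin (x : ℝ) : (intMin x).IsPrimitive := isPrimitive_primPart _

lemma aeval_intMin {x : ℝ} (hx : IsAlgebraic ℚ x) : aeval x (intMin x) = 0 := by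
  obtain ⟨c, -, h⟩ := exists_map_intMin_eq_C_mul_minpoly hx
  rw [← aeval_map_algebraMap ℚ, h, map_mul, minpoly.aeval, mul_zero]

lemma natDegree_intMin {x : ℝ} (hx : IsAlgebraic ℚ x) : (intMin x).natDegree = adeg x := by
  obtain ⟨c, hc, h⟩ := exists_map_intMin_eq_C_mul_minpoly hx
  rw [← natDegree_map_eq_of_injective (algebraMap ℤ ℚ).injective_int, h, natDegree_C_mul hc]
  rfl

lemma intMin_dvd {x : ℝ} (hx : IsAlgebraic ℚ x) {Q : ℤ[X]} (hQ : aeval x Q = 0) :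
    intMin x ∣ Q := by
  rcases eq_or_ne Q 0 with rfl | hQ0
  · exact dvd_zero _
  refine dvd_trans ?_ (primPart_dvd Q)
  refine (isPrimitive_intMin x).dvd_of_fraction_map_dvd_fraction_map (K := ℚ) ?_
  obtain ⟨c, hc, hmap⟩ := exists_map_intMin_eq_C_mul_minpoly hx
  have hmin : minpoly ℚ x ∣ Q.primPart.map (algebraMap ℤ ℚ) :=
    minpoly.dvd ℚ x (by rw [aeval_map_algebraMap]; exact aeval_primPart_eq_zero hQ0 hQ)
  rw [hmap]
  exact (isUnit_C.mpr hc.isUnit).mul_left_dvd.mpr hmin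

lemma aheight_le_polyHeight {x : ℝ} (hx : IsAlgebraic ℚ x) {Q : ℤ[X]} (hQ : Q ≠ 0)
    (hQx : aeval x Q = 0) (hdeg : Q.natDegree ≤ adeg x) : aheight x ≤ polyHeight Q := by
  obtain ⟨s, hs, rfl⟩ := exists_eq_mul_C_of_dvd_of_natDegree_le hQ (intMin_dvd hx hQx)
    (hdeg.trans (natDegree_intMin hx).ge)
  exact polyHeight_le_polyHeight_mul_C _ hs

lemma polyHeight_le_aheight {x : ℝ} (hx : IsAlgebraic ℚ x) {Q : ℤ[X]} (hQ : Q.IsPrimitive)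
    (hQx : aeval x Q = 0) (hdeg : Q.natDegree ≤ adeg x) : polyHeight Q ≤ aheight x := by
  obtain ⟨s, hs, hQs⟩ := exists_eq_mul_C_of_dvd_of_natDegree_le hQ.ne_zero (intMin_dvd hx hQx)
    (hdeg.trans (natDegree_intMin hx).ge)
  have hunit : IsUnit s := hQ s (hQs ▸ dvd_mul_left _ _)
  have hintMin : intMin x = Q * C s := by
    rcases Int.isUnit_iff.mp hunit with rfl | rfl <;> simp [hQs]
  rw [aheight, hintMin]
  exact polyHeight_le_polyHeight_mul_C Q hs

end IntMin

section Degree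

lemma adeg_ratCast (r : ℚ) : adeg r = 1 := by
  rw [adeg, ← eq_ratCast (algebraMap ℚ ℝ), minpoly.eq_X_sub_C, natDegree_X_sub_C]

lemma adeg_ratCast_mul_le {r : ℚ} (hr : r ≠ 0) {y : ℝ} (hy : IsAlgebraic ℚ y) :
    adeg (r * y) ≤ adeg y := by
  have hcomp : (minpoly ℚ y).comp (C r⁻¹ * X) ≠ 0 := by
    rw [Ne, comp_C_mul_X_eq_zero_iff (mem_nonZeroDivisors_of_ne_zero (inv_ne_zero hr))]
    exact minpoly.ne_zero hy.isIntegral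
  have hroot : aeval ((r : ℝ) * y) ((minpoly ℚ y).comp (C r⁻¹ * X)) = 0 := by
    rw [aeval_comp, map_mul, aeval_C, aeval_X, eq_ratCast, Rat.cast_inv,
      inv_mul_cancel_left₀ (Rat.cast_ne_zero.mpr hr), minpoly.aeval]
  calc adeg (r * y) ≤ ((minpoly ℚ y).comp (C r⁻¹ * X)).natDegree :=
        natDegree_le_of_dvd (minpoly.dvd ℚ _ hroot) hcomp
    _ = adeg y := by
      rw [natDegree_comp, natDegree_C_mul_X _ (inv_ne_zero hr), mul_one, adeg]

lemma adeg_ratCast_mul {r : ℚ} (hr : r ≠ 0) {y : ℝ} (hy : IsAlgebraic ℚ y) :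
    adeg (r * y) = adeg y := by
  refine (adeg_ratCast_mul_le hr hy).antisymm ?_
  have hry : IsAlgebraic ℚ ((r : ℝ) * y) := (isAlgebraic_algebraMap r).mul hy
  have hr' : (r : ℝ) ≠ 0 := Rat.cast_ne_zero.mpr hr
  simpa [inv_mul_cancel_left₀ hr'] using adeg_ratCast_mul_le (inv_ne_zero hr) hry

end Degree

lemma polyHeight_scaleRoots_comp_le (P : ℤ[X]) (p q : ℤ) :
    polyHeight ((P.scaleRoots p).comp (C q * X)) ≤
      polyHeight P * max p.natAbs q.natAbs ^ P.natDegree := by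
  refine polyHeight_le fun i hi => ?_
  have hiP : i ≤ P.natDegree :=
    calc i ≤ (P.scaleRoots p).natDegree * (C q * X).natDegree := hi.trans natDegree_comp_le
      _ ≤ P.natDegree * 1 := by rw [natDegree_scaleRoots]; gcongr; exact natDegree_C_mul_X_le q
      _ = P.natDegree := mul_one _
  rw [comp_C_mul_X_coeff, coeff_scaleRoots, Int.natAbs_mul, Int.natAbs_mul, Int.natAbs_pow,
    Int.natAbs_pow, ← Nat.sub_add_cancel hiP, pow_add, Nat.add_sub_cancel, ← mul_assoc]
  gcongr
  · exact coeff_natAbs_le_polyHeight P i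
  · exact le_max_left _ _
  · exact le_max_right _ _

theorem aheight_mul_intCast_div_le {x : ℝ} (hx : IsAlgebraic ℚ x) {p q : ℤ} (hp : p ≠ 0)
    (hq : q ≠ 0) : aheight (x * (p / q)) ≤ aheight x * max p.natAbs q.natAbs ^ adeg x := by
  set Q := ((intMin x).scaleRoots p).comp (C q * X)
  have hρ : (p : ℝ) / q = ((p / q : ℚ) : ℝ) := by push_cast; rfl
  have hρ0 : (p / q : ℚ) ≠ 0 := div_ne_zero (Int.cast_ne_zero.mpr hp) (Int.cast_ne_zero.mpr hq)
  have hγ : IsAlgebraic ℚ (x * (p / q)) := by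
    rw [hρ, mul_comm]; exact (isAlgebraic_algebraMap (p / q : ℚ)).mul hx
  have hdeg : adeg (x * (p / q)) = adeg x := by
    rw [hρ, mul_comm, adeg_ratCast_mul hρ0 hx]
  have hQdeg : Q.natDegree = adeg x := by
    rw [natDegree_comp, natDegree_scaleRoots, natDegree_C_mul_X _ hq, mul_one, natDegree_intMin hx]
  have hQ0 : Q ≠ 0 := by
    rw [Ne, comp_C_mul_X_eq_zero_iff (mem_nonZeroDivisors_of_ne_zero hq)]
    exact scaleRoots_ne_zero (isPrimitive_intMin x).ne_zero p
  have hQroot : aeval (x * (p / q)) Q = 0 := by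
    have hqx : (q : ℝ) * (x * (p / q)) = algebraMap ℤ ℝ p * x := by
      rw [algebraMap_int_eq, eq_intCast]; field_simp
    rw [aeval_comp, map_mul, aeval_C, aeval_X, algebraMap_int_eq, eq_intCast, hqx]
    exact scaleRoots_aeval_eq_zero (aeval_intMin hx)
  calc aheight (x * (p / q)) ≤ polyHeight Q :=
        aheight_le_polyHeight hγ hQ0 hQroot (hQdeg.trans hdeg.symm).le
    _ ≤ aheight x * max p.natAbs q.natAbs ^ adeg x := by
        rw [← natDegree_intMin hx]; exact polyHeight_scaleRoots_comp_le _ p q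

lemma max_natAbs_le_aheight_intCast_div {p q : ℤ} (hq : q ≠ 0) (hpq : IsCoprime p q) :
    max p.natAbs q.natAbs ≤ aheight (p / q) := by
  have hρ : (p : ℝ) / q = ((p / q : ℚ) : ℝ) := by push_cast; rfl
  set g : ℤ[X] := C q * X - C p
  have hg1 : g.coeff 1 = q := by rw [coeff_sub, coeff_C_mul_X, coeff_C]; simp
  have hg0 : g.coeff 0 = -p := by rw [coeff_sub, coeff_C_mul_X, coeff_C]; simp
  have hgprim : g.IsPrimitive := fun r hr => by
    rw [C_dvd_iff_dvd_coeff] at hr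
    exact hpq.isUnit_of_dvd' (dvd_neg.mp (hg0 ▸ hr 0)) (hg1 ▸ hr 1)
  have hgroot : aeval ((p : ℝ) / q) g = 0 := by
    rw [map_sub, map_mul, aeval_C, aeval_C, aeval_X, algebraMap_int_eq, eq_intCast, eq_intCast]
    field_simp
    ring
  have hdeg : g.natDegree ≤ adeg ((p : ℝ) / q) := by
    rw [hρ, adeg_ratCast]
    exact natDegree_sub_le_of_le (natDegree_C_mul_X_le q) (natDegree_C p).le
  have hx : IsAlgebraic ℚ ((p : ℝ) / q) := hρ ▸ isAlgebraic_algebraMap (p / q : ℚ)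
  calc max p.natAbs q.natAbs = max (g.coeff 0).natAbs (g.coeff 1).natAbs := by
        rw [hg0, hg1, Int.natAbs_neg]
    _ ≤ polyHeight g := max_le (coeff_natAbs_le_polyHeight g 0) (coeff_natAbs_le_polyHeight g 1)
    _ ≤ aheight (p / q) := polyHeight_le_aheight hx hgprim hgroot hdeg

section Liouville

open Nat

lemma pk_succ (k : ℕ) : pk (k + 1) = 10 ^ (k * k !) * pk k + 1 := by
  rw [pk, Finset.sum_range_succ, Nat.sub_self, pow_zero, pk, Finset.mul_sum]
  congr 1
  refine Finset.sum_congr rfl fun j hj => ?_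
  have hjk : (j + 1)! ≤ k ! := factorial_le (Finset.mem_range.mp hj)
  rw [← pow_add, factorial_succ, succ_mul]
  congr 1
  omega

lemma pk_pos {k : ℕ} (hk : 1 ≤ k) : 0 < pk k :=
  Finset.sum_pos (fun _ _ => by positivity) ⟨0, Finset.mem_range.mpr hk⟩

lemma qk_ne_zero (k : ℕ) : qk k ≠ 0 := by
  unfold qk; positivity

lemma isCoprime_pk_qk {k : ℕ} (hk : 1 ≤ k) : IsCoprime (pk k) (qk k) := by
  obtain ⟨k, rfl⟩ := Nat.exists_eq_add_of_le' hk
  have h10 : (10 : ℤ) ∣ 10 ^ (k * k !) * pk k := by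
    rcases k with _ | k
    · simp [pk]
    · exact (dvd_pow_self 10 (by positivity)).mul_right _
  obtain ⟨t, ht⟩ := h10
  have hcop : IsCoprime (pk (k + 1)) 10 := ⟨1, -t, by rw [pk_succ, ht]; ring⟩
  exact hcop.pow_right

end Liouville

theorem stmt8 (α : ℝ) (hα : IsAlgebraic ℚ α) (m : ℕ) (hm : adeg α = m)
    (k : ℕ) (hk : 1 ≤ k) :
    aheight (α * ((pk k : ℝ) / (qk k : ℝ))) ≤
      aheight α * aheight ((pk k : ℝ) / (qk k : ℝ)) ^ m :=
  calc aheight (α * ((pk k : ℝ) / (qk k : ℝ)))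
      ≤ aheight α * max (pk k).natAbs (qk k).natAbs ^ m :=
        hm ▸ aheight_mul_intCast_div_le hα (pk_pos hk).ne' (qk_ne_zero k)
    _ ≤ aheight α * aheight ((pk k : ℝ) / (qk k : ℝ)) ^ m := by
        gcongr
        exact max_natAbs_le_aheight_intCast_div (qk_ne_zero k) (isCoprime_pk_qk hk)
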